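/- arXiv:2310.16399 — 5 statements merged into one kernel-verified Lean document; each statement's English description precedes it below -/
import Mathlib

section
/- Let E be a field and A a 2×2 matrix over E whose minimal polynomial is g(x) = x² − cx + d (i.e., A satisfies g and is not scalar). Let K = E[U]/(g(U)). Then A, viewed as a matrix over K, is conjugate by an element of GL₂(K) to a lower triangular matrix whose (1,1)-entry is the image of U in K. -/
/-!
Statement 4: If `A` is a `2×2` matrix over a field `E` with minimal polynomial
`g(x) = x² − c·x + d`, and `K = E[U]/(g(U))`, then over `K` the matrix `A` is conjugate
(by an element of `GL₂(K)`) to a lower triangular matrix whose `(1,1)`-entry is `U`.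
-/

open Polynomial

noncomputable section

/-- The quadratic polynomial `x² - c·x + d`. -/
def quadPoly {E : Type*} [Field E] (c d : E) : E[X] := X ^ 2 - C c * X + C d

/-- `K = E[U]/(g(U))` where `g = x² - c·x + d`. -/
def quadExt (E : Type*) [Field E] (c d : E) : Type _ := AdjoinRoot (quadPoly c d)

instance (E : Type*) [Field E] (c d : E) : CommRing (quadExt E c d) := by
  unfold quadExt; infer_instance

instance (E : Type*) [Field E] (c d : E) : Algebra E (quadExt E c d) := by
  unfold quadExt; infer_instance

/-- The image `U` of `x` in `K = E[x]/(g)`. -/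
def quadRoot (E : Type*) [Field E] (c d : E) : quadExt E c d := AdjoinRoot.root (quadPoly c d)


/-!
Since `A` is not scalar, some row vector `w` makes `(w, wA)` a basis of `E²`; in that basis `A`
becomes the companion matrix `C` of `g`. Over `K`, the row vector `(U - c, 1)` is a left
eigenvector of `C` for the eigenvalue `U`, and it completes to the basis `(U - c, 1), (1, 0)`
of `K²` (the change of basis has determinant `-1`), which conjugates `C` to `!![U, 0; 1, c - U]`.
-/

open Matrix

theorem natDegree_quadPoly {E : Type*} [Field E] (c d : E) : (quadPoly c d).natDegree = 2 := by
  unfold quadPoly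
  compute_degree!

theorem aeval_quadPoly {E S : Type*} [Field E] [Ring S] [Algebra E S] (c d : E) (x : S) :
    aeval x (quadPoly c d) = x ^ 2 - c • x + d • 1 := by
  simp [quadPoly, Algebra.smul_def]

theorem aeval_quadRoot (E : Type*) [Field E] (c d : E) :
    aeval (quadRoot E c d) (quadPoly c d) = 0 :=
  (AdjoinRoot.aeval_eq _).trans AdjoinRoot.mk_self

theorem ne_algebraMap_of_one_lt_natDegree_minpoly {K S : Type*} [Field K] [Ring S]
    [Nontrivial S] [Algebra K S] {x : S} (hx : 1 < (minpoly K x).natDegree) (a : K) :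
    x ≠ algebraMap K S a := by
  rintro rfl
  simp [minpoly.eq_X_sub_C] at hx

theorem Matrix.exists_linearIndependent_vecMul {K n : Type*} [Field K] [Fintype n]
    [DecidableEq n] {A : Matrix n n K} (hA : ∀ a : K, A ≠ scalar n a) :
    ∃ w : n → K, LinearIndependent K ![w, w ᵥ* A] := by
  by_contra! h
  obtain ⟨a, ha⟩ := (vecMulLinear A).exists_eq_smul_id_of_forall_notLinearIndependent h
  refine hA a (ext fun i j => ?_)
  simpa [Pi.single_apply, eq_comm, diagonal_apply] using
    congrFun (LinearMap.congr_fun ha (Pi.single i 1)) j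

theorem Matrix.GeneralLinearGroup.conj_mul_map {n R S : Type*} [Fintype n] [DecidableEq n]
    [CommRing R] [CommRing S] (f : R →+* S) (h : GL n S) (g : GL n R) (M : Matrix n n R) :
    ((h * map f g : GL n S) : Matrix n n S) * M.map f * ((h * map f g)⁻¹ : GL n S) =
      h * ((g : Matrix n n R) * M * (g⁻¹ : GL n R)).map f * (h⁻¹ : GL n S) := by
  rw [_root_.mul_inv_rev, ← GeneralLinearGroup.map_inv]
  simp only [Units.val_mul, val_map_apply, Matrix.map_mul, Matrix.mul_assoc]

section Companion

variable {R : Type*} [CommRing R]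

/-- The companion matrix of `X² - c X + d`, for matrices acting on row vectors. -/
def quadCompanion (c d : R) : Matrix (Fin 2) (Fin 2) R := !![0, 1; -d, c]

theorem quadCompanion_map {S : Type*} [CommRing S] (f : R →+* S) (c d : R) :
    (quadCompanion c d).map f = quadCompanion (f c) (f d) := by
  ext i j
  fin_cases i <;> fin_cases j <;> simp [quadCompanion]

theorem of_vecMul_mul_eq_quadCompanion_mul {n : Type*} [Fintype n] [DecidableEq n]
    {A : Matrix n n R} {c d : R} (hA : A ^ 2 - c • A + d • 1 = 0) (w : n → R) :
    of ![w, w ᵥ* A] * A = quadCompanion c d * of ![w, w ᵥ* A] := by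
  have hA2 : w ᵥ* A ᵥ* A = -(d • w) + c • (w ᵥ* A) := by
    have hA' : A ^ 2 = -(d • 1) + c • A := by rw [← sub_eq_zero, ← hA]; abel
    rw [vecMul_vecMul, ← sq, hA', vecMul_add, vecMul_neg, vecMul_smul, vecMul_smul, vecMul_one]
  funext i
  rw [mul_apply_eq_vecMul, mul_apply_eq_vecMul, vecMul_eq_sum (quadCompanion c d i)]
  fin_cases i <;>
    simp only [quadCompanion, of_apply, cons_val', cons_val_fin_one, cons_val_zero, cons_val_one,
      Fin.zero_eta, Fin.mk_one, Fin.isValue, Fin.sum_univ_two, zero_smul, one_smul, zero_add, neg_smul]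
  exacts [rfl, hA2]

/-- Its first row `(u - c, 1)` is a left eigenvector of `quadCompanion c d` whenever
`u² - c u + d = 0`. -/
def quadEigenbasis (c u : R) : GL (Fin 2) R where
  val := !![u - c, 1; 1, 0]
  inv := !![0, 1; 1, c - u]
  val_inv := by ext i j; fin_cases i <;> fin_cases j <;> simp
  inv_val := by ext i j; fin_cases i <;> fin_cases j <;> simp

theorem quadEigenbasis_mul_quadCompanion_mul_inv {c d u : R} (hu : u ^ 2 - c * u + d = 0) :
    (quadEigenbasis c u : Matrix (Fin 2) (Fin 2) R) * quadCompanion c d *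
      (((quadEigenbasis c u)⁻¹ : GL (Fin 2) R) : Matrix (Fin 2) (Fin 2) R) =
        !![u, 0; 1, c - u] := by
  obtain rfl : d = c * u - u ^ 2 := by linear_combination hu
  ext i j
  fin_cases i <;> fin_cases j <;> simp [quadEigenbasis, quadCompanion, Units.inv_mk, mul_sub, sq, mul_comm]

end Companion

theorem exists_conj_eq_quadCompanion_of_minpoly_eq {K : Type*} [Field K]
    {A : Matrix (Fin 2) (Fin 2) K} {c d : K} (hmin : minpoly K A = quadPoly c d) :
    ∃ Q : GL (Fin 2) K,
      (Q : Matrix (Fin 2) (Fin 2) K) * A * ((Q⁻¹ : GL (Fin 2) K) : Matrix (Fin 2) (Fin 2) K) =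
        quadCompanion c d := by
  have hA : A ^ 2 - c • A + d • 1 = 0 := by
    rw [← aeval_quadPoly, ← hmin]
    exact minpoly.aeval K A
  have hA_ne : ∀ a, A ≠ scalar (Fin 2) a := ne_algebraMap_of_one_lt_natDegree_minpoly <| by
    rw [hmin, natDegree_quadPoly]
    exact one_lt_two
  obtain ⟨w, hw⟩ := exists_linearIndependent_vecMul hA_ne
  let Q : GL (Fin 2) K := (linearIndependent_rows_iff_isUnit.mp hw).unit
  have hQ : (Q : Matrix (Fin 2) (Fin 2) K) = of ![w, w ᵥ* A] := rfl
  refine ⟨Q, ?_⟩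
  rw [hQ, of_vecMul_mul_eq_quadCompanion_mul hA, ← hQ, Matrix.mul_assoc, Units.mul_inv,
    Matrix.mul_one]

theorem conjugate_to_lower_triangular_with_root
    (E : Type*) [Field E] (c d : E) (A : Matrix (Fin 2) (Fin 2) E)
    (hmin : minpoly E A = quadPoly c d) :
    ∃ (P : GL (Fin 2) (quadExt E c d)),
      ∀ B : Matrix (Fin 2) (Fin 2) (quadExt E c d),
        B = (P : Matrix (Fin 2) (Fin 2) (quadExt E c d)) *
              A.map (algebraMap E (quadExt E c d)) *
              ((P⁻¹ : GL (Fin 2) (quadExt E c d)) : Matrix (Fin 2) (Fin 2) (quadExt E c d)) →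
          B 0 0 = quadRoot E c d ∧ B 0 1 = 0 := by
  set ι := algebraMap E (quadExt E c d)
  set u := quadRoot E c d
  have hu : u ^ 2 - ι c * u + ι d = 0 := by
    simpa [aeval_quadPoly, Algebra.smul_def] using aeval_quadRoot E c d
  obtain ⟨Q, hQ⟩ := exists_conj_eq_quadCompanion_of_minpoly_eq hmin
  refine ⟨quadEigenbasis (ι c) u * GeneralLinearGroup.map ι Q, fun B hB => ?_⟩
  rw [hB, GeneralLinearGroup.conj_mul_map, hQ, quadCompanion_map,
    quadEigenbasis_mul_quadCompanion_mul_inv hu]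
  exact ⟨rfl, rfl⟩

end
end

section
/- Let G be a finite abelian group with an element c of order 2, and write G = G₂ × G' with G₂ the 2-Sylow subgroup (so c ∈ G₂) and G' of odd order. A Z₂[G]₋-module B is projective over Z₂[G]₋ if and only if B is projective as a module over the subring Z₂[G₂]₋. -/
/-!
Write `S = ℤ₂[G₂]₋`. Splitting off the odd factor identifies `ℤ₂[G₂ × G']₋` with the group
ring `S[G']`, in which the natural inclusion of `S` becomes the inclusion of constants.
Since `|G'|` is odd it is a unit in `ℤ₂ ⊆ S`, so Maschke's averaging trick turns an
`S`-linear splitting of a free presentation of `B` into an `S[G']`-linear one. Conversely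
`S[G']` is free over `S`, so projectivity over `S[G']` descends to `S`.
-/

noncomputable section

/-- The "minus" group ring `A[G]/(1 + c)`. -/
def negGroupRing (A : Type*) [CommRing A] (G : Type*) [CommGroup G] (c : G) : Type _ :=
  MonoidAlgebra A G ⧸ (Ideal.span {1 + MonoidAlgebra.of A G c} : Ideal (MonoidAlgebra A G))

instance (A : Type*) [CommRing A] (G : Type*) [CommGroup G] (c : G) :
    CommRing (negGroupRing A G c) := by unfold negGroupRing; infer_instance

instance (A : Type*) [CommRing A] (G : Type*) [CommGroup G] (c : G) :
    Algebra A (negGroupRing A G c) := by unfold negGroupRing; infer_instance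

def negGroupRing.mkOf (A : Type*) [CommRing A] {G : Type*} [CommGroup G] (c : G) (g : G) :
    negGroupRing A G c :=
  Ideal.Quotient.mk _ (MonoidAlgebra.of A G g)

theorem Module.Projective.trans {R A M : Type*} [CommSemiring R] [Semiring A] [Algebra R A]
    [AddCommMonoid M] [Module R M] [Module A M] [IsScalarTower R A M]
    [Module.Projective R A] [Module.Projective A M] : Module.Projective R M := by
  classical
  obtain ⟨s, hs⟩ := Module.projective_def'.mp ‹Module.Projective A M›
  have : Module.Projective R (M →₀ A) := .of_equiv' (finsuppLequivDFinsupp R).symm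
  exact .of_split (s.restrictScalars R) ((Finsupp.linearCombination A id).restrictScalars R)
    (LinearMap.ext fun m => LinearMap.congr_fun hs m)

theorem Module.Projective.iff_of_ringEquiv {R T M : Type*} [Semiring R] [Semiring T]
    [AddCommMonoid M] [Module R M] [Module T M] (e : R ≃+* T)
    (he : ∀ (r : R) (m : M), e r • m = r • m) :
    Module.Projective R M ↔ Module.Projective T M := by
  have := RingHomInvPair.of_ringEquiv e
  have := RingHomInvPair.of_ringEquiv_symm e
  let f : M ≃ₛₗ[(e : R →+* T)] M :=
    { AddEquiv.refl M with map_smul' := fun r m => (he r m).symm }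
  exact ⟨fun _ => .of_equiv f, fun _ => .of_equiv f.symm⟩

namespace MonoidAlgebra

variable {k G M : Type*} [CommRing k] [Group G] [Finite G] [AddCommGroup M] [Module k M]
  [Module (MonoidAlgebra k G) M] [IsScalarTower k (MonoidAlgebra k G) M]

theorem projective_of_projective (hG : IsUnit (Nat.card G : k)) [Module.Projective k M] :
    Module.Projective (MonoidAlgebra k G) M := by
  have := Fintype.ofFinite G
  let p := Finsupp.linearCombination (MonoidAlgebra k G) (id : M → M)
  obtain ⟨s, hs⟩ := Module.projective_lifting_property (p.restrictScalars k) LinearMap.id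
    (Finsupp.linearCombination_id_surjective _ M)
  have p_conjugate : ∀ (g : G) (m : M), p (s.conjugate g m) = m := fun g m => by
    rw [LinearMap.conjugate_apply, map_smul, ← LinearMap.restrictScalars_apply (R := k),
      ← LinearMap.comp_apply, hs, LinearMap.id_apply, smul_smul, single_mul_single,
      inv_mul_cancel, one_mul, ← one_def, one_smul]
  refine .of_split (s.equivariantProjection G) p (LinearMap.ext fun m => ?_)
  rw [LinearMap.comp_apply, LinearMap.equivariantProjection_apply,
    ← LinearMap.restrictScalars_apply (R := k), map_smul, map_sum]
  simp only [LinearMap.restrictScalars_apply, p_conjugate]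
  rw [Finset.sum_const, Finset.card_univ, ← Nat.cast_smul_eq_nsmul k, smul_smul,
    Fintype.card_eq_nat_card, Ring.inverse_mul_cancel _ hG, one_smul, LinearMap.id_apply]

theorem projective_iff_projective (hG : IsUnit (Nat.card G : k)) :
    Module.Projective (MonoidAlgebra k G) M ↔ Module.Projective k M :=
  ⟨fun _ => .trans (A := MonoidAlgebra k G), fun _ => projective_of_projective hG⟩

end MonoidAlgebra

namespace negGroupRing

open MonoidAlgebra

variable {A : Type*} [CommRing A] {G H : Type*} [CommGroup G] [CommGroup H] {c : G}

variable (A c) in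
def ofHom : G →* negGroupRing A G c :=
  (Ideal.Quotient.mk _ : MonoidAlgebra A G →+* _).toMonoidHom.comp (of A G)

@[simp]
theorem ofHom_apply (g : G) : ofHom A c g = mkOf A c g := rfl

@[simp]
theorem mkOf_one : mkOf A c 1 = 1 := map_one (ofHom A c)

theorem mkOf_mul (g h : G) : mkOf A c (g * h) = mkOf A c g * mkOf A c h := map_mul (ofHom A c) g h

variable (A c) in
theorem one_add_mkOf_self : 1 + mkOf A c c = 0 :=
  Ideal.Quotient.eq_zero_iff_mem.mpr (Ideal.subset_span rfl)

section lift

variable {B : Type*} [Semiring B] [Algebra A B]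

def lift (f : G →* B) (hf : 1 + f c = 0) : negGroupRing A G c →ₐ[A] B :=
  Ideal.Quotient.liftₐ _ (MonoidAlgebra.lift A B G f) fun a ha => by
    obtain ⟨x, rfl⟩ := Ideal.mem_span_singleton'.mp ha
    rw [map_mul, map_add, map_one, MonoidAlgebra.lift_of, hf, mul_zero]

@[simp]
theorem lift_mkOf (f : G →* B) (hf : 1 + f c = 0) (g : G) : lift f hf (mkOf A c g) = f g :=
  MonoidAlgebra.lift_of (R := A) f g

@[ext]
theorem algHom_ext ⦃φ ψ : negGroupRing A G c →ₐ[A] B⦄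
    (h : ∀ g, φ (mkOf A c g) = ψ (mkOf A c g)) : φ = ψ :=
  Ideal.Quotient.algHom_ext A <| MonoidAlgebra.algHom_ext (fun g => h g) (Subsingleton.elim _ _)

end lift

variable (A G H c) in
def inl : negGroupRing A G c →ₐ[A] negGroupRing A (G × H) (c, 1) :=
  lift ((ofHom A (c, 1)).comp (MonoidHom.inl G H)) (one_add_mkOf_self A (c, 1))

@[simp]
theorem inl_mkOf (g : G) : inl A G H c (mkOf A c g) = mkOf A (c, 1) (g, 1) := lift_mkOf _ _ g

-- `[(g, h)] ↦ single h [g]`, with inverse `single h s ↦ inl s * [(1, h)]`.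
variable (A G H c) in
def prodEquiv : negGroupRing A (G × H) (c, 1) ≃ₐ[A] MonoidAlgebra (negGroupRing A G c) H :=
  AlgEquiv.ofAlgHom
    (lift ((((algebraMap (negGroupRing A G c) (MonoidAlgebra (negGroupRing A G c) H))
        : negGroupRing A G c →* _).comp (ofHom A c)).coprod (of _ H)) (by
      rw [MonoidHom.coprod_apply, map_one, mul_one]
      show algebraMap (negGroupRing A G c) (MonoidAlgebra (negGroupRing A G c) H) 1 +
        algebraMap _ _ (mkOf A c c) = 0
      rw [← map_add, one_add_mkOf_self, map_zero]))
    (liftNCAlgHom (inl A G H c) ((ofHom A (c, 1)).comp (MonoidHom.inr G H))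
      fun _ _ => Commute.all _ _)
    (MonoidAlgebra.algHom_ext (fun h => by simp) (algHom_ext fun g => by simp))
    (by
      ext ⟨g, h⟩
      simp [← mkOf_mul])

@[simp]
theorem prodEquiv_symm_algebraMap (s : negGroupRing A G c) :
    (prodEquiv A G H c).symm (algebraMap _ (MonoidAlgebra (negGroupRing A G c) H) s) =
      inl A G H c s := by
  simp [prodEquiv, Prod.mk_one_one]

end negGroupRing

theorem projective_iff_projective_over_two_sylow_minus_general
    (G₂ G' : Type) [CommGroup G₂] [CommGroup G'] [Fintype G']
    (hG' : Odd (Fintype.card G'))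
    (c : G₂)
    (φ : negGroupRing ℤ_[2] G₂ c →ₐ[ℤ_[2]] negGroupRing ℤ_[2] (G₂ × G') (c, 1))
    (hφ : ∀ g : G₂, φ (negGroupRing.mkOf ℤ_[2] c g) = negGroupRing.mkOf ℤ_[2] ((c, 1) : G₂ × G') (g, 1))
    (B : Type) [AddCommGroup B] [Module (negGroupRing ℤ_[2] (G₂ × G') (c, 1)) B] :
    Module.Projective (negGroupRing ℤ_[2] (G₂ × G') (c, 1)) B ↔
      (letI : Module (negGroupRing ℤ_[2] G₂ c) B := Module.compHom B φ.toRingHom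
       Module.Projective (negGroupRing ℤ_[2] G₂ c) B) := by
  obtain rfl : φ = negGroupRing.inl ℤ_[2] G₂ G' c := negGroupRing.algHom_ext fun g => by simp [hφ]
  let e := negGroupRing.prodEquiv ℤ_[2] G₂ G' c
  let : Module (negGroupRing ℤ_[2] G₂ c) B :=
    Module.compHom B (negGroupRing.inl ℤ_[2] G₂ G' c).toRingHom
  let : Module (MonoidAlgebra (negGroupRing ℤ_[2] G₂ c) G') B := Module.compHom B e.symm.toRingHom
  have : IsScalarTower (negGroupRing ℤ_[2] G₂ c) (MonoidAlgebra (negGroupRing ℤ_[2] G₂ c) G') B :=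
    ⟨fun s t b => by
      show e.symm (s • t) • b = _
      rw [Algebra.smul_def, map_mul, negGroupRing.prodEquiv_symm_algebraMap]
      -- `mul_smul` alone cannot match the two semigroup structures on the irreducible quotient.
      exact (inferInstance : Module (negGroupRing ℤ_[2] (G₂ × G') (c, 1)) B).mul_smul _ _ _⟩
  have hcard : IsUnit (Nat.card G' : negGroupRing ℤ_[2] G₂ c) := by
    have : IsUnit (Nat.card G' : ℤ_[2]) := PadicInt.isUnit_iff.mpr <|
      PadicInt.norm_natCast_eq_one_iff.mpr <| Nat.coprime_two_left.mpr <| by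
        rwa [Nat.card_eq_fintype_card]
    simpa using this.map (algebraMap ℤ_[2] (negGroupRing ℤ_[2] G₂ c))
  have he : ∀ r (b : B), e.toRingEquiv r • b = r • b := fun r b => by
    show e.symm (e r) • b = r • b
    rw [e.symm_apply_apply]
  exact (Module.Projective.iff_of_ringEquiv e.toRingEquiv he).trans
    (MonoidAlgebra.projective_iff_projective hcard)

theorem projective_iff_projective_over_two_sylow_minus
    (G₂ G' : Type) [CommGroup G₂] [Fintype G₂] [CommGroup G'] [Fintype G']
    (hG₂ : IsPGroup 2 G₂) (hG' : Odd (Fintype.card G'))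
    (c : G₂) (hc : c * c = 1) (hc1 : c ≠ 1)
    (φ : negGroupRing ℤ_[2] G₂ c →ₐ[ℤ_[2]] negGroupRing ℤ_[2] (G₂ × G') (c, 1))
    (hφ : ∀ g : G₂, φ (negGroupRing.mkOf ℤ_[2] c g) = negGroupRing.mkOf ℤ_[2] ((c, 1) : G₂ × G') (g, 1))
    (B : Type) [AddCommGroup B] [Module (negGroupRing ℤ_[2] (G₂ × G') (c, 1)) B] :
    Module.Projective (negGroupRing ℤ_[2] (G₂ × G') (c, 1)) B ↔
      (letI : Module (negGroupRing ℤ_[2] G₂ c) B := Module.compHom B φ.toRingHom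
       Module.Projective (negGroupRing ℤ_[2] G₂ c) B) :=
  projective_iff_projective_over_two_sylow_minus_general G₂ G' hG' c φ hφ B
end
end

section
/- Let G be a finite group, C a class module for G with fundamental class γ ∈ H²(G,C), and let C(γ) be the middle term of the corresponding 2-extension 0 → C → C(γ) → Z[G] → Z → 0. Then for a normal subgroup H ⊆ G, the H-coinvariants satisfy: the image of the norm map N_H : (I_G)_H → (I_G)^H is isomorphic to the augmentation ideal I_{G/H}, where I_G ⊂ Z[G] is the augmentation ideal. -/
/-!
Statement 10: Let `G` be a finite group, `H ⊴ G`, `I_G ⊂ ℤ[G]` the augmentation ideal and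
`N_H = Σ_{h∈H} h` the norm element (which is central since `H` is normal).  Then the image
of the norm map on `I_G` is isomorphic, as a `ℤ[G]`-module, to the augmentation ideal
`I_{G/H}` of `ℤ[G/H]` (with `ℤ[G/H]` a `ℤ[G]`-module via the projection `ℤ[G] → ℤ[G/H]`).
This identifies the image of `N_H : (I_G)_H → (I_G)^H` with `I_{G/H}`.
-/

noncomputable section

/-- The augmentation ideal `I_G = ker(ℤ[G] → ℤ)`. -/
def augIdeal (G : Type*) [Group G] : Ideal (MonoidAlgebra ℤ G) :=
  RingHom.ker ((MonoidAlgebra.lift ℤ ℤ G (1 : G →* ℤ)).toRingHom)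

/-- The norm element `N_H = Σ_{h ∈ H} h ∈ ℤ[G]`. -/
def normElt (G : Type*) [Group G] (H : Subgroup G) [Fintype H] : MonoidAlgebra ℤ G :=
  ∑ h : H, MonoidAlgebra.of ℤ G (h : G)

/-- Right multiplication by the norm element, as a map of left `ℤ[G]`-modules. -/
def mulRightNorm (G : Type*) [Group G] (H : Subgroup G) [Fintype H] :
    MonoidAlgebra ℤ G →ₗ[MonoidAlgebra ℤ G] MonoidAlgebra ℤ G where
  toFun x := x * normElt G H
  map_add' a b := add_mul a b _
  map_smul' r x := by simp [smul_eq_mul, mul_assoc]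

/-- The augmentation ideal of `ℤ[G/H]`, regarded as a `ℤ[G]`-module via the natural
projection `ℤ[G] → ℤ[G/H]`. -/
def augIdealOfQuotient (G : Type*) [Group G] (H : Subgroup G) [H.Normal] : Type _ :=
  ↥(augIdeal (G ⧸ H))

instance (G : Type*) [Group G] (H : Subgroup G) [H.Normal] :
    AddCommGroup (augIdealOfQuotient G H) := by unfold augIdealOfQuotient; infer_instance

instance (G : Type*) [Group G] (H : Subgroup G) [H.Normal] :
    Module (MonoidAlgebra ℤ G) (augIdealOfQuotient G H) :=
  Module.compHom ↥(augIdeal (G ⧸ H)) (MonoidAlgebra.mapDomainRingHom ℤ (QuotientGroup.mk' H))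



set_option linter.unusedSectionVars false

section aux
variable (G : Type*) [Group G] (H : Subgroup G) [H.Normal] [Fintype H]

abbrev piQ : MonoidAlgebra ℤ G →+* MonoidAlgebra ℤ (G ⧸ H) :=
  MonoidAlgebra.mapDomainRingHom ℤ (QuotientGroup.mk' H)

lemma piQ_surj : Function.Surjective (piQ G H) := by
  intro f
  refine ⟨MonoidAlgebra.mapDomain Quotient.out f, ?_⟩
  show MonoidAlgebra.mapDomain _ _ = f
  rw [← MonoidAlgebra.coeff_inj]
  show Finsupp.mapDomain _ (Finsupp.mapDomain _ f.coeff) = f.coeff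
  rw [← Finsupp.mapDomain_comp]
  convert Finsupp.mapDomain_id
  ext q
  exact Quotient.out_eq q

lemma aug_comp (x : MonoidAlgebra ℤ G) :
    (MonoidAlgebra.lift ℤ ℤ (G ⧸ H) (1 : (G⧸H) →* ℤ)) (piQ G H x)
      = (MonoidAlgebra.lift ℤ ℤ G (1 : G →* ℤ)) x := by
  induction x using MonoidAlgebra.induction_linear with
  | zero => simp
  | add a b ha hb => simp only [map_add, ha, hb]
  | single g r =>
      show (MonoidAlgebra.lift ℤ ℤ (G ⧸ H) 1) (MonoidAlgebra.mapDomain _ (MonoidAlgebra.single g r)) = _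
      simp [Finsupp.mapDomain_single, MonoidAlgebra.lift_single]

lemma of_mul_norm (g g' : G) (hgg : (g : G ⧸ H) = (g' : G ⧸ H)) :
    MonoidAlgebra.of ℤ G g * normElt G H = MonoidAlgebra.of ℤ G g' * normElt G H := by
  have hmem : g'⁻¹ * g ∈ H := by
    rw [QuotientGroup.eq] at hgg
    simpa using H.inv_mem hgg
  unfold normElt
  rw [Finset.mul_sum, Finset.mul_sum]
  apply Fintype.sum_equiv (Equiv.mulLeft (⟨g'⁻¹ * g, hmem⟩ : H))
  intro h
  rw [← map_mul, ← map_mul]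
  congr 1
  show g * (h : G) = g' * ((⟨g'⁻¹ * g, hmem⟩ * h : H) : G)
  push_cast
  group

/-- Section `ℤ[G/H] → ℤ[G]`, `q ↦ (representative of q) * N_H`. -/
def sMap : MonoidAlgebra ℤ (G ⧸ H) →ₗ[ℤ] MonoidAlgebra ℤ G :=
  Finsupp.linearCombination ℤ (fun q : G ⧸ H => MonoidAlgebra.of ℤ G q.out * normElt G H) ∘ₗ
    (MonoidAlgebra.coeffLinearEquiv ℤ : MonoidAlgebra ℤ (G ⧸ H) ≃ₗ[ℤ] (G ⧸ H →₀ ℤ)).toLinearMap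

lemma sMap_piQ (x : MonoidAlgebra ℤ G) :
    sMap G H (piQ G H x) = x * normElt G H := by
  induction x using MonoidAlgebra.induction_linear with
  | zero => simp
  | add a b ha hb => rw [map_add, map_add, ha, hb, add_mul]
  | single g r =>
      have h1 : piQ G H (MonoidAlgebra.single g r) = MonoidAlgebra.single ((g : G ⧸ H)) r := by
        show MonoidAlgebra.mapDomain _ _ = _
        simp [MonoidAlgebra.mapDomain_single]
      rw [h1]
      show Finsupp.linearCombination _ _ (Finsupp.single _ _) = _
      rw [Finsupp.linearCombination_single]
      rw [of_mul_norm G H (Quotient.out ((g : G ⧸ H))) g (Quotient.out_eq _)]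
      have h2 : (MonoidAlgebra.single g r : MonoidAlgebra ℤ G)
          = r • MonoidAlgebra.of ℤ G g := by
        simp [MonoidAlgebra.smul_single]
      rw [h2, smul_mul_assoc]

lemma piQ_norm : piQ G H (normElt G H) = (Fintype.card H) • 1 := by
  unfold normElt
  rw [map_sum]
  have : ∀ h : H, piQ G H (MonoidAlgebra.of ℤ G (h : G))
      = MonoidAlgebra.of ℤ (G ⧸ H) 1 := by
    intro h
    have h1 : (((h : G) : G) : G ⧸ H) = 1 := by
      simpa [QuotientGroup.eq_one_iff] using h.2
    show MonoidAlgebra.mapDomain _ _ = _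
    simp [MonoidAlgebra.mapDomain_single, h1]
  simp only [this]
  rw [Finset.sum_const, Finset.card_univ]
  rfl

lemma piQ_sMap (f : MonoidAlgebra ℤ (G ⧸ H)) :
    piQ G H (sMap G H f) = (Fintype.card H) • f := by
  obtain ⟨x, rfl⟩ := piQ_surj G H f
  rw [sMap_piQ, map_mul, piQ_norm, mul_smul_comm, mul_one]

lemma sMap_injective : Function.Injective (sMap G H) := by
  intro a b hab
  have := congrArg (piQ G H) hab
  rw [piQ_sMap, piQ_sMap] at this
  have h3 : (Fintype.card H : ℤ) • a = (Fintype.card H : ℤ) • b := by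
    rw [Nat.cast_smul_eq_nsmul, Nat.cast_smul_eq_nsmul]; exact this
  ext q
  have h2 := congrArg (fun f : MonoidAlgebra ℤ (G ⧸ H) => f.coeff q) h3
  simp only [MonoidAlgebra.coeff_smul_apply, smul_eq_mul] at h2
  exact mul_left_cancel₀ (Int.natCast_ne_zero.mpr Fintype.card_ne_zero) h2

lemma sMap_mem (f : MonoidAlgebra ℤ (G ⧸ H)) (hf : f ∈ augIdeal (G ⧸ H)) :
    sMap G H f ∈ Submodule.map (mulRightNorm G H) (augIdeal G) := by
  obtain ⟨x, hx⟩ := piQ_surj G H f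
  refine ⟨x, ?_, ?_⟩
  · show (MonoidAlgebra.lift ℤ ℤ G (1 : G →* ℤ)).toRingHom x = 0
    have := aug_comp G H x
    rw [hx] at this
    exact this ▸ hf
  · show x * normElt G H = sMap G H f
    rw [← hx, sMap_piQ]

lemma sMap_mul (x : MonoidAlgebra ℤ G) (f : MonoidAlgebra ℤ (G ⧸ H)) :
    sMap G H (piQ G H x * f) = x * sMap G H f := by
  obtain ⟨z, rfl⟩ := piQ_surj G H f
  rw [← map_mul, sMap_piQ, sMap_piQ, mul_assoc]

end aux

section main
variable (G : Type*) [Group G] (H : Subgroup G) [H.Normal] [Fintype H]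

def eMap : augIdealOfQuotient G H →ₗ[MonoidAlgebra ℤ G]
    ↥(Submodule.map (mulRightNorm G H) (augIdeal G)) where
  toFun y := ⟨sMap G H (y : augIdeal (G ⧸ H)).1, sMap_mem G H _ (y : augIdeal (G ⧸ H)).2⟩
  map_add' a b := by
    apply Subtype.ext
    show sMap G H ((a : augIdeal (G ⧸ H)).1 + (b : augIdeal (G ⧸ H)).1) = _
    rw [map_add]; rfl
  map_smul' r y := by
    apply Subtype.ext
    show sMap G H (piQ G H r * (y : augIdeal (G ⧸ H)).1) = r • sMap G H (y : augIdeal (G ⧸ H)).1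
    rw [sMap_mul, smul_eq_mul]

lemma eMap_bijective : Function.Bijective (eMap G H) := by
  constructor
  · intro a b hab
    have h1 : sMap G H (a : augIdeal (G ⧸ H)).1 = sMap G H (b : augIdeal (G ⧸ H)).1 :=
      congrArg Subtype.val hab
    exact Subtype.ext (sMap_injective G H h1)
  · rintro ⟨w, x, hx, rfl⟩
    have hmem : piQ G H x ∈ augIdeal (G ⧸ H) := by
      show (MonoidAlgebra.lift ℤ ℤ (G ⧸ H) (1 : (G ⧸ H) →* ℤ)).toRingHom (piQ G H x) = 0
      have := aug_comp G H x
      exact this.trans hx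
    refine ⟨(⟨piQ G H x, hmem⟩ : augIdeal (G ⧸ H)), ?_⟩
    apply Subtype.ext
    show sMap G H (piQ G H x) = mulRightNorm G H x
    rw [sMap_piQ]; rfl

end main

theorem image_of_norm_iso_augIdeal_quotient
    (G : Type*) [Group G] [Fintype G] (H : Subgroup G) [H.Normal] [Fintype H] :
    Nonempty ((Submodule.map (mulRightNorm G H) (augIdeal G)) ≃ₗ[MonoidAlgebra ℤ G]
      augIdealOfQuotient G H) :=
  ⟨(LinearEquiv.ofBijective (eMap G H) (eMap_bijective G H)).symm⟩

end
end

section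
/- Let G be a finite group with normal subgroup H. Then the kernel of the norm map N_H : (I_G)_H → (I_G)^H equals the image of (I_H)_H in (I_G)_H, and this kernel is isomorphic to H^{ab} = H/[H,H]. -/
/-!
Statement 11: Let `G` be a finite group, `H ⊴ G`.  The kernel of the norm map
`N_H : (I_G)_H → (I_G)^H` equals the image of `(I_H)_H` in `(I_G)_H`, and this kernel is
isomorphic to `H^{ab} = H/[H,H]`.  Here `(I_G)_H = I_G / (I_H·I_G)`, so the claim is:
`{m ∈ I_G : N_H·m = 0} = (ℤ-span of {h - 1 : h ∈ H}) + I_H·I_G` inside `ℤ[G]`, and the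
quotient of this kernel by `I_H·I_G` is isomorphic to `H^{ab}`.
-/

noncomputable section

/-- The subgroup `{m ∈ I_G : N_H · m = 0}`, i.e. the preimage in `I_G` of the kernel of
the norm map on `(I_G)_H`. -/
def normKer (G : Type*) [Group G] (H : Subgroup G) [Fintype H] :
    AddSubgroup (MonoidAlgebra ℤ G) where
  carrier := {m | m ∈ augIdeal G ∧ normElt G H * m = 0}
  zero_mem' := ⟨(augIdeal G).zero_mem, by simp⟩
  add_mem' := by
    rintro a b ⟨ha1, ha2⟩ ⟨hb1, hb2⟩
    exact ⟨(augIdeal G).add_mem ha1 hb1, by rw [mul_add, ha2, hb2, add_zero]⟩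
  neg_mem' := by
    rintro a ⟨ha1, ha2⟩
    exact ⟨(augIdeal G).neg_mem ha1, by rw [mul_neg, ha2, neg_zero]⟩

/-- The image of `I_H` in `ℤ[G]`: the `ℤ`-span of `{h - 1 : h ∈ H}`. -/
def imageIH (G : Type*) [Group G] (H : Subgroup G) : AddSubgroup (MonoidAlgebra ℤ G) :=
  AddSubgroup.closure {x | ∃ h ∈ H, x = MonoidAlgebra.of ℤ G h - 1}

/-- The subgroup `I_H · I_G`, whose quotient defines the `H`-coinvariants `(I_G)_H`. -/
def coinvRel (G : Type*) [Group G] (H : Subgroup G) : AddSubgroup (MonoidAlgebra ℤ G) :=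
  AddSubgroup.closure
    {x | ∃ h ∈ H, ∃ m ∈ augIdeal G, x = (MonoidAlgebra.of ℤ G h - 1) * m}

namespace Aux

open MonoidAlgebra Finset

variable {G : Type*} [Group G] (H : Subgroup G) [H.Normal]

/-- augmentation -/
def eps : MonoidAlgebra ℤ G →+* ℤ := (MonoidAlgebra.lift ℤ ℤ G (1 : G →* ℤ)).toRingHom

lemma eps_single (g : G) (n : ℤ) : eps (single g n : MonoidAlgebra ℤ G) = n := by
  simp [eps, MonoidAlgebra.lift_single]

lemma mem_aug_iff (m : MonoidAlgebra ℤ G) : m ∈ augIdeal G ↔ eps m = 0 := Iff.rfl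

lemma of_sub_one_mem_aug {h : G} : of ℤ G h - 1 ∈ augIdeal G := by
  have : eps (of ℤ G h - 1 : MonoidAlgebra ℤ G) = 0 := by
    simp [eps, MonoidAlgebra.lift_of]
  exact this

lemma out_spec (g : G) : g * (Quotient.out (QuotientGroup.mk g : G ⧸ H))⁻¹ ∈ H := by
  have h1 : (QuotientGroup.mk (Quotient.out (QuotientGroup.mk g : G ⧸ H)) : G ⧸ H)
      = QuotientGroup.mk g := Quotient.out_eq _
  have h2 : (Quotient.out (QuotientGroup.mk g : G ⧸ H))⁻¹ * g ∈ H := QuotientGroup.eq.mp h1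
  have := ‹H.Normal›.conj_mem _ h2 g
  simpa [mul_assoc] using this

def tau (g : G) : Additive (Abelianization H) :=
  Additive.ofMul (Abelianization.of
    ⟨g * (Quotient.out (QuotientGroup.mk g : G ⧸ H))⁻¹, out_spec H g⟩)

lemma tau_mul (h : G) (hh : h ∈ H) (g : G) :
    tau H (h * g) = Additive.ofMul (Abelianization.of (⟨h, hh⟩ : H)) + tau H g := by
  have hq : (QuotientGroup.mk (h * g) : G ⧸ H) = QuotientGroup.mk g := by
    rw [QuotientGroup.eq]
    have : g⁻¹ * h⁻¹ * g ∈ H := ‹H.Normal›.conj_mem' _ (H.inv_mem hh) g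
    simpa [mul_assoc] using this
  have ho : Quotient.out (QuotientGroup.mk (h*g) : G ⧸ H)
      = Quotient.out (QuotientGroup.mk g : G ⧸ H) := by rw [hq]
  unfold tau
  have e1 : (⟨h * g * (Quotient.out (QuotientGroup.mk (h*g) : G ⧸ H))⁻¹, out_spec H (h*g)⟩ : H)
      = ⟨h, hh⟩ * ⟨g * (Quotient.out (QuotientGroup.mk g : G ⧸ H))⁻¹, out_spec H g⟩ := by
    ext; simp only [Subgroup.coe_mul]; rw [ho, mul_assoc]
  rw [e1, map_mul]
  rfl

/-- the main additive map θ : ℤ[G] → H^{ab} -/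
def theta : MonoidAlgebra ℤ G →+ Additive (Abelianization H) :=
  (Finsupp.liftAddHom (fun g => zmultiplesHom _ (tau H g))).comp
    MonoidAlgebra.coeffAddEquiv.toAddMonoidHom

lemma theta_single (g : G) (n : ℤ) : theta H (single g n : MonoidAlgebra ℤ G) = n • tau H g := by
  unfold theta
  show Finsupp.liftAddHom _ (Finsupp.single g n) = _
  erw [Finsupp.liftAddHom_apply_single]
  rfl

lemma theta_mul (h : G) (hh : h ∈ H) (m : MonoidAlgebra ℤ G) :
    theta H ((of ℤ G h - 1) * m)
      = eps m • Additive.ofMul (Abelianization.of (⟨h, hh⟩ : H)) := by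
  have key : (theta H).comp (AddMonoidHom.mulLeft (of ℤ G h - 1 : MonoidAlgebra ℤ G))
      = (zmultiplesHom _
          (Additive.ofMul (Abelianization.of (⟨h, hh⟩ : H)))).comp (eps (G := G)).toAddMonoidHom := by
    apply MonoidAlgebra.addMonoidHom_ext
    intro g n
    show theta H ((of ℤ G h - 1) * single g n)
        = (eps (single g n : MonoidAlgebra ℤ G)) • Additive.ofMul (Abelianization.of (⟨h, hh⟩ : H))
    have : (of ℤ G h - 1 : MonoidAlgebra ℤ G) * single g n = single (h * g) n - single g n := by
      have : (of ℤ G h : MonoidAlgebra ℤ G) * single g n = single (h * g) n := by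
        simp [MonoidAlgebra.of_apply, MonoidAlgebra.single_mul_single]
      rw [sub_mul, this, one_mul]
    rw [this, map_sub, theta_single, theta_single, tau_mul H h hh, eps_single]
    simp [smul_add]
  exact congrFun (congrArg DFunLike.coe key) m

lemma theta_coinv : coinvRel G H ≤ (theta H).ker := by
  rw [coinvRel, AddSubgroup.closure_le]
  rintro x ⟨h, hh, m, hm, rfl⟩
  rw [SetLike.mem_coe, AddMonoidHom.mem_ker, theta_mul H h hh, (mem_aug_iff m).mp hm, zero_smul]

lemma theta_of_sub_one (h : G) (hh : h ∈ H) :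
    theta H (of ℤ G h - 1) = Additive.ofMul (Abelianization.of (⟨h, hh⟩ : H)) := by
  have h1 : (1 : MonoidAlgebra ℤ G) = single 1 1 := rfl
  have e1 : theta H (of ℤ G h) = tau H h := by
    rw [MonoidAlgebra.of_apply, theta_single, one_smul]
  have e2 : theta H 1 = tau H 1 := by rw [h1, theta_single, one_smul]
  have e3 : tau H h = Additive.ofMul (Abelianization.of (⟨h, hh⟩ : H)) + tau H 1 := by
    simpa using tau_mul H h hh 1
  rw [map_sub, e1, e2, e3]
  abel

/-- the reverse map ψ : H^{ab} → ℤ[G]/coinvRel -/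
def fH : H →* Multiplicative (MonoidAlgebra ℤ G ⧸ coinvRel G H) where
  toFun h := Multiplicative.ofAdd (QuotientAddGroup.mk (of ℤ G (h : G) - 1))
  map_one' := by
    have h0 : (of ℤ G ((1 : H) : G) - 1 : MonoidAlgebra ℤ G) = 0 := by
      rw [OneMemClass.coe_one, map_one, sub_self]
    show Multiplicative.ofAdd (QuotientAddGroup.mk (of ℤ G ((1 : H) : G) - 1)) = 1
    rw [h0]
    rfl
  map_mul' h1 h2 := by
    have key : (of ℤ G ((h1 * h2 : H) : G) - 1 : MonoidAlgebra ℤ G)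
        - ((of ℤ G (h1 : G) - 1) + (of ℤ G (h2 : G) - 1))
        = (of ℤ G (h1 : G) - 1) * (of ℤ G (h2 : G) - 1) := by
      push_cast
      rw [map_mul]
      noncomm_ring
    have hm : (of ℤ G (h1 : G) - 1) * (of ℤ G (h2 : G) - 1) ∈ coinvRel G H :=
      AddSubgroup.subset_closure ⟨(h1 : G), h1.2, _, of_sub_one_mem_aug, rfl⟩
    have : QuotientAddGroup.mk (s := coinvRel G H) (of ℤ G ((h1 * h2 : H) : G) - 1)
        = QuotientAddGroup.mk ((of ℤ G (h1 : G) - 1) + (of ℤ G (h2 : G) - 1)) := by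
      rw [QuotientAddGroup.eq]
      have : -(of ℤ G ((h1*h2 : H) : G) - 1 : MonoidAlgebra ℤ G)
          + ((of ℤ G (h1 : G) - 1) + (of ℤ G (h2 : G) - 1))
          = -((of ℤ G (h1 : G) - 1) * (of ℤ G (h2 : G) - 1)) := by
        rw [← key]; abel
      rw [this]
      exact (coinvRel G H).neg_mem hm
    show Multiplicative.ofAdd _ = Multiplicative.ofAdd _ * Multiplicative.ofAdd _
    rw [← ofAdd_add]
    exact congrArg _ (by simpa using this)

def psi : Additive (Abelianization H) →+ MonoidAlgebra ℤ G ⧸ coinvRel G H :=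
  MonoidHom.toAdditiveLeft (Abelianization.lift (fH H))

lemma psi_of (h : G) (hh : h ∈ H) :
    psi H (Additive.ofMul (Abelianization.of (⟨h, hh⟩ : H)))
      = QuotientAddGroup.mk (of ℤ G h - 1) := by
  show Multiplicative.toAdd ((Abelianization.lift (fH H)) (Abelianization.of ⟨h, hh⟩)) = _
  rw [Abelianization.lift_apply_of]
  rfl

lemma psi_theta (x : MonoidAlgebra ℤ G) (hx : x ∈ imageIH G H) :
    psi H (theta H x) = QuotientAddGroup.mk x := by
  induction hx using AddSubgroup.closure_induction with
  | mem y hy =>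
    obtain ⟨h, hh, rfl⟩ := hy
    rw [theta_of_sub_one H h hh, psi_of]
  | zero => simp
  | add a b _ _ ha hb => rw [map_add, map_add, ha, hb]; rfl
  | neg a _ ha => rw [map_neg, map_neg, ha]; rfl

lemma imageIH_theta_zero (x : MonoidAlgebra ℤ G) (hx : x ∈ imageIH G H)
    (hz : theta H x = 0) : x ∈ coinvRel G H := by
  have := psi_theta H x hx
  rw [hz, map_zero] at this
  exact (QuotientAddGroup.eq_zero_iff x).mp this.symm

/-! ### norm computations -/

variable [Fintype H]

lemma norm_mul_of {h : G} (hh : h ∈ H) : normElt G H * of ℤ G h = normElt G H := by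
  rw [normElt, Finset.sum_mul]
  have : ∀ k : H, (of ℤ G (k : G)) * of ℤ G h = of ℤ G ((k * ⟨h, hh⟩ : H) : G) := by
    intro k; rw [← map_mul]; rfl
  rw [Finset.sum_congr rfl fun k _ => this k]
  exact Fintype.sum_equiv (Equiv.mulRight (⟨h, hh⟩ : H)) _ _ (fun k => rfl)

lemma norm_mul_of_sub_one {h : G} (hh : h ∈ H) : normElt G H * (of ℤ G h - 1) = 0 := by
  rw [mul_sub, mul_one, norm_mul_of H hh, sub_self]

lemma mem_normKer_iff (m : MonoidAlgebra ℤ G) :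
    m ∈ normKer G H ↔ m ∈ augIdeal G ∧ normElt G H * m = 0 := Iff.rfl

lemma norm_mul_apply (m : MonoidAlgebra ℤ G) (g : G) :
    (normElt G H * m).coeff g = ∑ k : H, m.coeff ((k : G)⁻¹ * g) := by
  rw [normElt, Finset.sum_mul, MonoidAlgebra.coeff_sum, Finsupp.finset_sum_apply]
  refine Finset.sum_congr rfl fun k _ => ?_
  rw [MonoidAlgebra.of_apply, MonoidAlgebra.coeff_single_mul_apply, one_mul]

/-! ### the sup characterization -/

lemma gen_mem_sup {h : G} (hh : h ∈ H) (g : G) :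
    (of ℤ G h - 1) * of ℤ G g ∈ imageIH G H ⊔ coinvRel G H := by
  have key : (of ℤ G h - 1) * of ℤ G g
      = (of ℤ G h - 1) + (of ℤ G h - 1) * (of ℤ G g - 1) := by noncomm_ring
  rw [key]
  refine AddSubgroup.add_mem _ ?_ ?_
  · exact AddSubgroup.mem_sup_left (AddSubgroup.subset_closure ⟨h, hh, rfl⟩)
  · exact AddSubgroup.mem_sup_right
      (AddSubgroup.subset_closure ⟨h, hh, _, of_sub_one_mem_aug, rfl⟩)

lemma normKer_le_sup [Fintype G] :
    normKer G H ≤ imageIH G H ⊔ coinvRel G H := by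
  classical
  intro m hm
  obtain ⟨-, hm2⟩ := hm
  have hsum : ∀ g : G, ∑ k : H, m.coeff ((k : G)⁻¹ * g) = 0 := by
    intro g
    rw [← norm_mul_apply H m g, hm2]
    rfl
  -- coset representative
  set s : G → G := fun g => Quotient.out (QuotientGroup.mk g : G ⧸ H) with hs
  -- decomposition
  have hdecomp : m = (∑ g ∈ m.coeff.support, (single g (m.coeff g) - single (s g) (m.coeff g)))
      + ∑ g ∈ m.coeff.support, single (s g) (m.coeff g) := by
    rw [Finset.sum_sub_distrib, sub_add_cancel]
    exact (MonoidAlgebra.sum_coeff_single m).symm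
  -- first sum is in the sup
  have hA : (∑ g ∈ m.coeff.support, (single g (m.coeff g) - single (s g) (m.coeff g)) : MonoidAlgebra ℤ G)
      ∈ imageIH G H ⊔ coinvRel G H := by
    refine AddSubgroup.sum_mem _ fun g _ => ?_
    have e : (single g (m.coeff g) - single (s g) (m.coeff g) : MonoidAlgebra ℤ G)
        = m.coeff g • ((of ℤ G (g * (s g)⁻¹) - 1) * of ℤ G (s g)) := by
      have e2 : (of ℤ G (g * (s g)⁻¹) - 1 : MonoidAlgebra ℤ G) * of ℤ G (s g)
          = single g 1 - single (s g) 1 := by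
        rw [sub_mul, one_mul, ← map_mul, inv_mul_cancel_right]
        rfl
      rw [e2, smul_sub, MonoidAlgebra.smul_single, MonoidAlgebra.smul_single, smul_eq_mul, mul_one]
    rw [e]
    exact AddSubgroup.zsmul_mem _ (gen_mem_sup H (out_spec H g) (s g)) _
  -- second sum is zero
  have hB : (∑ g ∈ m.coeff.support, single (s g) (m.coeff g) : MonoidAlgebra ℤ G) = 0 := by
    letI : Fintype (G ⧸ H) := Fintype.ofFinite _
    have hext : (∑ g ∈ m.coeff.support, single (s g) (m.coeff g) : MonoidAlgebra ℤ G)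
        = ∑ g : G, single (s g) (m.coeff g) := by
      apply Finset.sum_subset (Finset.subset_univ _)
      intro g _ hg
      rw [Finsupp.notMem_support_iff.mp hg]
      exact MonoidAlgebra.single_zero _
    rw [hext]
    have hfib := Finset.sum_fiberwise_of_maps_to
      (fun g (_ : g ∈ (Finset.univ : Finset G)) => Finset.mem_univ (QuotientGroup.mk g : G ⧸ H))
      (fun g => (single (s g) (m.coeff g) : MonoidAlgebra ℤ G))
    rw [← hfib]
    refine Finset.sum_eq_zero fun q _ => ?_
    have hinner : ∀ g ∈ Finset.univ.filter (fun g : G => (QuotientGroup.mk g : G ⧸ H) = q),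
        (single (s g) (m.coeff g) : MonoidAlgebra ℤ G) = single (Quotient.out q) (m.coeff g) := by
      intro g hg
      simp only [Finset.mem_filter, Finset.mem_univ, true_and] at hg
      exact congrArg (fun x => single x (m.coeff g))
        (by show Quotient.out (QuotientGroup.mk g : G ⧸ H) = Quotient.out q; rw [hg])
    have hq : (QuotientGroup.mk (Quotient.out q) : G ⧸ H) = q := Quotient.out_eq q
    have hz : ∑ g ∈ Finset.univ.filter (fun g : G => (QuotientGroup.mk g : G ⧸ H) = q), m.coeff g
        = 0 := by
      rw [← hsum (Quotient.out q)]
      have jmem : ∀ g ∈ Finset.univ.filter (fun g : G => (QuotientGroup.mk g : G ⧸ H) = q),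
          Quotient.out q * g⁻¹ ∈ H := by
        intro g hg
        simp only [Finset.mem_filter, Finset.mem_univ, true_and] at hg
        have h1 : g⁻¹ * Quotient.out q ∈ H := QuotientGroup.eq.mp (hg.trans hq.symm)
        have := ‹H.Normal›.conj_mem _ h1 g
        simpa [mul_assoc] using this
      refine (Finset.sum_bij' (fun (k : H) (_ : k ∈ Finset.univ) => (k : G)⁻¹ * Quotient.out q)
        (fun g hg => (⟨Quotient.out q * g⁻¹, jmem g hg⟩ : H)) ?_ ?_ ?_ ?_ ?_).symm
      · intro k _
        simp only [Finset.mem_filter, Finset.mem_univ, true_and]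
        rw [← hq, QuotientGroup.eq]
        have : (Quotient.out q)⁻¹ * (k : G) * Quotient.out q ∈ H :=
          ‹H.Normal›.conj_mem' _ k.2 _
        simpa [mul_assoc] using this
      · intro g _; exact Finset.mem_univ _
      · intro k _
        ext
        simp [mul_assoc]
      · intro g _
        simp [mul_assoc]
      · intro k _
        rfl
    have hsplit : ∑ g ∈ Finset.univ.filter (fun g : G => (QuotientGroup.mk g : G ⧸ H) = q),
        (single (Quotient.out q) (m.coeff g) : MonoidAlgebra ℤ G)
        = single (Quotient.out q)
            (∑ g ∈ Finset.univ.filter (fun g : G => (QuotientGroup.mk g : G ⧸ H) = q), m.coeff g) :=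
      (map_sum (MonoidAlgebra.singleAddHom (Quotient.out q)) _ _).symm
    rw [Finset.sum_congr rfl hinner, hsplit, hz]
    exact MonoidAlgebra.single_zero _
  rw [hdecomp, hB, add_zero]
  exact hA

lemma sup_le_normKer : imageIH G H ⊔ coinvRel G H ≤ normKer G H := by
  refine sup_le ?_ ?_
  · rw [imageIH, AddSubgroup.closure_le]
    rintro x ⟨h, hh, rfl⟩
    exact ⟨of_sub_one_mem_aug, norm_mul_of_sub_one H hh⟩
  · rw [coinvRel, AddSubgroup.closure_le]
    rintro x ⟨h, hh, m, hm, rfl⟩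
    refine ⟨Ideal.mul_mem_left _ _ hm, ?_⟩
    rw [← mul_assoc, norm_mul_of_sub_one H hh, zero_mul]

end Aux

theorem kernel_of_norm_on_coinvariants
    (G : Type*) [Group G] [Fintype G] (H : Subgroup G) [H.Normal] [Fintype H] :
    normKer G H = imageIH G H ⊔ coinvRel G H ∧
    Nonempty ((↥(normKer G H) ⧸ ((coinvRel G H).addSubgroupOf (normKer G H))) ≃+
      Additive (Abelianization H)) := by
  have hpart1 : normKer G H = imageIH G H ⊔ coinvRel G H :=
    le_antisymm (Aux.normKer_le_sup H) (Aux.sup_le_normKer H)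
  refine ⟨hpart1, ?_⟩
  set θ' : normKer G H →+ Additive (Abelianization H) :=
    (Aux.theta H).comp (normKer G H).subtype with hθ'
  have hsurj : Function.Surjective θ' := by
    intro a
    obtain ⟨h, hh⟩ : ∃ h : H, Abelianization.of h = Additive.toMul a :=
      QuotientGroup.mk_surjective (Additive.toMul a)
    have hmem : MonoidAlgebra.of ℤ G (h : G) - 1 ∈ normKer G H :=
      Aux.sup_le_normKer H
        (AddSubgroup.mem_sup_left (AddSubgroup.subset_closure ⟨(h : G), h.2, rfl⟩))
    refine ⟨⟨MonoidAlgebra.of ℤ G (h : G) - 1, hmem⟩, ?_⟩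
    show Aux.theta H (MonoidAlgebra.of ℤ G (h : G) - 1) = a
    rw [Aux.theta_of_sub_one H (h : G) h.2]
    have : (⟨(h : G), h.2⟩ : H) = h := rfl
    rw [this, hh]
    rfl
  have hker : θ'.ker = (coinvRel G H).addSubgroupOf (normKer G H) := by
    ext x
    constructor
    · intro hx
      have hx0 : Aux.theta H (x : MonoidAlgebra ℤ G) = 0 := hx
      have hxm : (x : MonoidAlgebra ℤ G) ∈ imageIH G H ⊔ coinvRel G H := hpart1 ▸ x.2
      obtain ⟨y, hy, z, hz, hyz⟩ := AddSubgroup.mem_sup.mp hxm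
      have hz0 : Aux.theta H z = 0 := Aux.theta_coinv H hz
      have hty : Aux.theta H y = 0 := by
        have := congrArg (Aux.theta H) hyz
        rw [map_add, hz0, add_zero, hx0] at this
        exact this
      have hyc : y ∈ coinvRel G H := Aux.imageIH_theta_zero H y hy hty
      show (x : MonoidAlgebra ℤ G) ∈ coinvRel G H
      rw [← hyz]
      exact (coinvRel G H).add_mem hyc hz
    · intro hx
      show Aux.theta H (x : MonoidAlgebra ℤ G) = 0
      exact Aux.theta_coinv H hx
  exact ⟨(QuotientAddGroup.quotientAddEquivOfEq hker.symm).trans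
    (QuotientAddGroup.quotientKerEquivOfSurjective θ' hsurj)⟩

end
end

section
/- Let G be a finite abelian group with complex conjugation c of order 2, and let X_H be the kernel of the augmentation map Y → Z where Y = ⊕_{v∈S} Z[G/G_v] with c ∈ G_v for all v ∈ S (S nonempty). Then the minus part X₋ = X/(1+c)X is a finite group of order 2^{r−1}, where r = Σ_{v∈S} [G : G_v] is the total number of cosets. -/
/-!
Statement 14: With `Y = ⊕_{v∈S} ℤ[G/G_v]`, `c ∈ G_v` for all `v`, `S ≠ ∅`, and
`X = ker(Y → ℤ)` the kernel of the augmentation, the minus part `X₋ = X ⊗ ℤ[G]₋` is a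
finite group of order `2^{r-1}`, where `r = Σ_v [G : G_v]`.
-/

noncomputable section

def augHom (G : Type) [CommGroup G] : MonoidAlgebra ℤ G →+* ℤ :=
  (MonoidAlgebra.lift ℤ ℤ G (1 : G →* ℤ)).toRingHom

def TrivInt (G : Type) [CommGroup G] : Type := ℤ

instance (G : Type) [CommGroup G] : AddCommGroup (TrivInt G) :=
  inferInstanceAs (AddCommGroup ℤ)

instance (G : Type) [CommGroup G] : Module (MonoidAlgebra ℤ G) (TrivInt G) :=
  Module.compHom ℤ (augHom G)

def Yquot (G : Type) [CommGroup G] (K : Subgroup G) : Type :=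
  MonoidAlgebra ℤ G ⧸
    (Ideal.span {x | ∃ h ∈ K, x = MonoidAlgebra.of ℤ G h - 1} : Ideal (MonoidAlgebra ℤ G))

instance (G : Type) [CommGroup G] (K : Subgroup G) : AddCommGroup (Yquot G K) := by
  unfold Yquot; infer_instance

instance (G : Type) [CommGroup G] (K : Subgroup G) :
    Module (MonoidAlgebra ℤ G) (Yquot G K) := by
  unfold Yquot; infer_instance

def Yquot.mk (G : Type) [CommGroup G] (K : Subgroup G) (x : MonoidAlgebra ℤ G) : Yquot G K :=
  Submodule.Quotient.mk x

def Rminus (G : Type) [CommGroup G] (c : G) : Type :=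
  MonoidAlgebra ℤ G ⧸
    (Ideal.span {1 + MonoidAlgebra.of ℤ G c} : Ideal (MonoidAlgebra ℤ G))

instance (G : Type) [CommGroup G] (c : G) : AddCommGroup (Rminus G c) := by
  unfold Rminus; infer_instance

instance (G : Type) [CommGroup G] (c : G) :
    Module (MonoidAlgebra ℤ G) (Rminus G c) := by
  unfold Rminus; infer_instance

/-! ### Auxiliary development -/

section Aux

variable (G : Type) [CommGroup G] (K : Subgroup G)

/-- The augmentation-type ideal attached to a subgroup `K`. -/
def Iaug : Ideal (MonoidAlgebra ℤ G) :=
  Ideal.span {x | ∃ h ∈ K, x = MonoidAlgebra.of ℤ G h - 1}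

/-- Push-forward of the monoid algebra along the projection `G → G ⧸ K`. -/
def piK : MonoidAlgebra ℤ G →+* MonoidAlgebra ℤ (G ⧸ K) :=
  MonoidAlgebra.mapDomainRingHom ℤ (QuotientGroup.mk' K)

lemma piK_of (g : G) : piK G K (MonoidAlgebra.of ℤ G g)
    = MonoidAlgebra.of ℤ (G ⧸ K) (QuotientGroup.mk g) := by
  simp [piK, MonoidAlgebra.mapDomainRingHom, MonoidAlgebra.of_apply, Finsupp.mapDomain_single]

lemma Iaug_le_ker : Iaug G K ≤ RingHom.ker (piK G K) := by
  rw [Iaug, Ideal.span_le]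
  rintro x ⟨h, hh, rfl⟩
  simp only [SetLike.mem_coe, RingHom.mem_ker, map_sub, map_one, piK_of,
    (QuotientGroup.eq_one_iff h).2 hh, sub_eq_zero]

/-- The induced `ℤ`-linear map `Yquot G K → ℤ[G ⧸ K]`. -/
def fK : Yquot G K →ₗ[ℤ] MonoidAlgebra ℤ (G ⧸ K) :=
  ((Ideal.Quotient.lift (Iaug G K) (piK G K)
    (fun a ha => Iaug_le_ker G K ha)).toAddMonoidHom).toIntLinearMap

lemma fK_mk (x : MonoidAlgebra ℤ G) : fK G K (Yquot.mk G K x) = piK G K x := rfl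

lemma mk_eq_of_coset {g : G} : Yquot.mk G K (MonoidAlgebra.of ℤ G g)
    = Yquot.mk G K (MonoidAlgebra.of ℤ G ((QuotientGroup.mk g : G ⧸ K).out)) := by
  rw [Yquot.mk, Yquot.mk]
  apply (Submodule.Quotient.eq _).mpr
  have hmem : ((QuotientGroup.mk g : G ⧸ K).out)⁻¹ * g ∈ K := by
    rw [← QuotientGroup.eq]
    simp [QuotientGroup.out_eq']
  have hg : g = (QuotientGroup.mk g : G ⧸ K).out * (((QuotientGroup.mk g : G ⧸ K).out)⁻¹ * g) := by
    group
  have : MonoidAlgebra.of ℤ G g - MonoidAlgebra.of ℤ G ((QuotientGroup.mk g : G ⧸ K).out)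
      = MonoidAlgebra.of ℤ G ((QuotientGroup.mk g : G ⧸ K).out)
        * (MonoidAlgebra.of ℤ G (((QuotientGroup.mk g : G ⧸ K).out)⁻¹ * g) - 1) := by
    rw [mul_sub, mul_one, ← map_mul, ← hg]
  rw [this]
  exact Ideal.mul_mem_left _ _ (Ideal.subset_span ⟨_, hmem, rfl⟩)

/-- Section of `fK`. -/
def psiK : (G ⧸ K →₀ ℤ) →ₗ[ℤ] Yquot G K :=
  Finsupp.lift (Yquot G K) ℤ (G ⧸ K)
    (fun q => Yquot.mk G K (MonoidAlgebra.of ℤ G q.out))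

lemma psiK_single (q : G ⧸ K) (a : ℤ) :
    psiK G K (Finsupp.single q a) = a • Yquot.mk G K (MonoidAlgebra.of ℤ G q.out) := by
  simp [psiK]

/-- `Yquot G K` is `ℤ`-linearly the free module on `G ⧸ K`. -/
def eK : Yquot G K ≃ₗ[ℤ] (G ⧸ K →₀ ℤ) := by
  refine LinearEquiv.ofLinear ((MonoidAlgebra.coeffLinearEquiv ℤ).toLinearMap.comp (fK G K)) (psiK G K) ?_ ?_
  · apply Finsupp.lhom_ext
    intro q a
    have : (fK G K (psiK G K (Finsupp.single q a))).coeff = Finsupp.single q a := by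
      rw [psiK_single, map_zsmul, fK_mk, piK_of]
      simp [QuotientGroup.out_eq', MonoidAlgebra.of_apply, Finsupp.smul_single]
    simpa using this
  · have hsurj : Function.Surjective (Yquot.mk G K) := Submodule.Quotient.mk_surjective _
    apply LinearMap.ext
    intro y
    obtain ⟨x, rfl⟩ := hsurj y
    rw [LinearMap.comp_apply, LinearMap.id_apply]
    induction x using MonoidAlgebra.induction_on with
    | of g =>
        rw [LinearMap.comp_apply]
        erw [fK_mk G K, piK_of]
        rw [show (MonoidAlgebra.coeffLinearEquiv ℤ).toLinearMap ((MonoidAlgebra.of ℤ (G ⧸ K)) (QuotientGroup.mk g))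
          = Finsupp.single (QuotientGroup.mk g : G ⧸ K) (1 : ℤ) from rfl, psiK_single]
        rw [one_smul, ← mk_eq_of_coset]
    | add f g hf hg =>
        have h1 : Yquot.mk G K (f + g) = Yquot.mk G K f + Yquot.mk G K g := rfl
        rw [h1, map_add, map_add, hf, hg]
    | smul r f hf =>
        have h1 : Yquot.mk G K (r • f) = r • Yquot.mk G K f := rfl
        rw [h1, map_zsmul, map_zsmul, hf]

instance : Module.Free ℤ (Yquot G K) := Module.Free.of_equiv (eK G K).symm

instance [Fintype G] : Module.Finite ℤ (Yquot G K) := by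
  have : Finite (G ⧸ K) := Quotient.finite _
  have : Fintype (G ⧸ K) := Fintype.ofFinite _
  exact Module.Finite.equiv (eK G K).symm

lemma finrank_Yquot [Fintype G] : Module.finrank ℤ (Yquot G K) = K.index := by
  have : Finite (G ⧸ K) := Quotient.finite _
  have : Fintype (G ⧸ K) := Fintype.ofFinite _
  rw [(eK G K).finrank_eq, Module.finrank_finsupp_self, Subgroup.index_eq_card,
    Nat.card_eq_fintype_card]

lemma of_smul_Yquot {h : G} (hh : h ∈ K) (y : Yquot G K) :
    MonoidAlgebra.of ℤ G h • y = y := by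
  obtain ⟨x, rfl⟩ := Submodule.Quotient.mk_surjective _ y
  show Submodule.Quotient.mk _ = Submodule.Quotient.mk _
  rw [Submodule.Quotient.eq]
  have : MonoidAlgebra.of ℤ G h • x - x = (MonoidAlgebra.of ℤ G h - 1) * x := by
    rw [sub_mul, one_mul]; rfl
  rw [this]
  exact Ideal.mul_mem_right _ _ (Ideal.subset_span ⟨h, hh, rfl⟩)

end Aux

open Pointwise

theorem card_minus_part_of_X
    (G : Type) [CommGroup G] [Fintype G] (c : G) (hc : c * c = 1) (hc1 : c ≠ 1)
    (ι : Type) [Fintype ι] [DecidableEq ι] [Nonempty ι] (Gv : ι → Subgroup G)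
    (hcmem : ∀ v, c ∈ Gv v)
    (ε : (∀ v, Yquot G (Gv v)) →ₗ[MonoidAlgebra ℤ G] TrivInt G)
    (hεaug : ∀ (v : ι) (x : MonoidAlgebra ℤ G),
      ε (Pi.single v (Yquot.mk G (Gv v) x)) = augHom G x)
    (hεsurj : Function.Surjective ε) :
    Nat.card (TensorProduct (MonoidAlgebra ℤ G) ↥(LinearMap.ker ε) (Rminus G c)) =
      2 ^ ((∑ v, (Gv v).index) - 1) := by
  classical
  set A := MonoidAlgebra ℤ G with hA
  set Y := (∀ v, Yquot G (Gv v)) with hY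
  set J : Ideal A := Ideal.span {1 + MonoidAlgebra.of ℤ G c} with hJ
  -- Step 1 : tensoring with `Rminus` is quotienting by `J`
  have e0 : TensorProduct A ↥(LinearMap.ker ε) (Rminus G c) ≃ₗ[A]
      (↥(LinearMap.ker ε) ⧸ (J • (⊤ : Submodule A ↥(LinearMap.ker ε)))) :=
    TensorProduct.tensorQuotEquivQuotSMul _ J
  rw [Nat.card_congr e0.toEquiv]
  -- Step 2 : `(1 + c) • x = x + x` on `X`
  have hcY : ∀ y : Y, MonoidAlgebra.of ℤ G c • y = y := by
    intro y; funext v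
    exact of_smul_Yquot G (Gv v) (hcmem v) (y v)
  have hc2 : ∀ x : ↥(LinearMap.ker ε), (1 + MonoidAlgebra.of ℤ G c) • x = x + x := by
    intro x
    apply Subtype.ext
    push_cast [Submodule.coe_smul]
    rw [add_smul, one_smul, hcY]
  have hNmem : ∀ x : ↥(LinearMap.ker ε),
      (x ∈ J • (⊤ : Submodule A ↥(LinearMap.ker ε)) ↔ ∃ y : ↥(LinearMap.ker ε), y + y = x) := by
    intro x
    rw [hJ, Submodule.ideal_span_singleton_smul]
    constructor
    · intro hx
      obtain ⟨y, -, hy⟩ := Set.mem_smul_set.mp hx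
      exact ⟨y, by rw [← hc2 y]; exact hy⟩
    · rintro ⟨y, rfl⟩
      rw [← hc2 y]
      exact Submodule.smul_mem_pointwise_smul y _ ⊤ trivial
  -- Step 3 : move to a `ℤ`-module quotient
  set P : Submodule ℤ Y := (LinearMap.ker ε).restrictScalars ℤ with hP
  set N₂ : Submodule ℤ ↥P := (2 : ℤ) • (⊤ : Submodule ℤ ↥P) with hN₂
  have hN₂mem : ∀ x : ↥P, (x ∈ N₂ ↔ ∃ y : ↥P, y + y = x) := by
    intro x
    rw [hN₂]
    constructor
    · intro hx
      obtain ⟨y, -, hy⟩ := Set.mem_smul_set.mp hx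
      exact ⟨y, by rw [← two_smul ℤ y]; exact hy⟩
    · rintro ⟨y, rfl⟩
      rw [← two_smul ℤ y]
      exact Submodule.smul_mem_pointwise_smul y _ ⊤ trivial
  let ePX : ↥(LinearMap.ker ε) ≃ ↥P := Equiv.subtypeEquivRight (fun x => Iff.rfl)
  have e2 : (↥(LinearMap.ker ε) ⧸ (J • (⊤ : Submodule A ↥(LinearMap.ker ε)))) ≃ (↥P ⧸ N₂) := by
    refine @Quotient.congr _ _ (Submodule.quotientRel _) (Submodule.quotientRel N₂) ePX ?_
    intro a b
    rw [Submodule.quotientRel_def, Submodule.quotientRel_def, hNmem _, hN₂mem _]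
    constructor
    · rintro ⟨y, hy⟩
      refine ⟨ePX y, Subtype.ext ?_⟩
      have h2 := congrArg Subtype.val hy
      push_cast at h2 ⊢
      exact h2
    · rintro ⟨y, hy⟩
      refine ⟨ePX.symm y, Subtype.ext ?_⟩
      have h2 := congrArg Subtype.val hy
      push_cast at h2 ⊢
      exact h2
  rw [Nat.card_congr e2]
  -- Step 4 : basis of `P`
  have hYfree : Module.Free ℤ Y := inferInstance
  have hYfin : Module.Finite ℤ Y := inferInstance
  let bY := Module.Free.chooseBasis ℤ Y
  obtain ⟨m, bP⟩ := Submodule.basisOfPid bY P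
  -- Step 5 : cardinality of the quotient
  have hcard : Nat.card (↥P ⧸ N₂) = 2 ^ m := by
    set Npi : Submodule ℤ (Fin m → ℤ) :=
      Submodule.pi Set.univ (fun _ => Ideal.span {(2 : ℤ)}) with hNpi
    have hmap : N₂.map (bP.equivFun : ↥P →ₗ[ℤ] (Fin m → ℤ)) = Npi := by
      rw [hN₂, Submodule.map_pointwise_smul, Submodule.map_top]
      have hrange : LinearMap.range (bP.equivFun : ↥P →ₗ[ℤ] (Fin m → ℤ)) = ⊤ :=
        LinearMap.range_eq_top.mpr bP.equivFun.surjective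
      rw [hrange]
      ext x
      constructor
      · intro hx
        obtain ⟨y, -, hy⟩ := Set.mem_smul_set.mp hx
        rw [Submodule.mem_pi]
        intro i _
        rw [Ideal.mem_span_singleton]
        exact ⟨y i, by rw [← hy]; simp [mul_comm]⟩
      · intro hx
        rw [Submodule.mem_pi] at hx
        have : ∀ i, ∃ y, x i = 2 * y := by
          intro i
          exact Ideal.mem_span_singleton.mp (hx i trivial)
        choose y hy using this
        refine Set.mem_smul_set.mpr ⟨y, trivial, ?_⟩
        funext i
        simp [hy i, mul_comm]
    have e4 : (↥P ⧸ N₂) ≃ₗ[ℤ] ((Fin m → ℤ) ⧸ Npi) :=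
      Submodule.Quotient.equiv N₂ Npi bP.equivFun hmap
    have e5 : ((Fin m → ℤ) ⧸ Npi) ≃ₗ[ℤ] ∀ _ : Fin m, (ℤ ⧸ Ideal.span {(2 : ℤ)}) :=
      Submodule.quotientPi _
    rw [Nat.card_congr e4.toEquiv, Nat.card_congr e5.toEquiv, Nat.card_pi]
    have hz : Nat.card (ℤ ⧸ Ideal.span {(2 : ℤ)}) = 2 := by
      have : Ideal.span {(2 : ℤ)} = Ideal.span {((2 : ℕ) : ℤ)} := by norm_num
      rw [this, Nat.card_congr (Int.quotientSpanNatEquivZMod 2).toEquiv, Nat.card_zmod]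
    simp [hz]
  rw [hcard]
  -- Step 6 : `m = r - 1` via a splitting of `ε`
  have hfinY : Module.finrank ℤ Y = ∑ v, (Gv v).index := by
    rw [Module.finrank_pi_fintype ℤ]
    exact Finset.sum_congr rfl fun v _ => finrank_Yquot G (Gv v)
  let εZ : Y →ₗ[ℤ] ℤ := ε.toAddMonoidHom.toIntLinearMap
  have hker : ∀ y : Y, (εZ y = 0 ↔ y ∈ P) := fun y => Iff.rfl
  obtain ⟨y₀, hy₀⟩ := hεsurj (show TrivInt G from (1 : ℤ))
  have hy₀' : εZ y₀ = 1 := hy₀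
  have hres : ∀ y : Y, y - εZ y • y₀ ∈ P := by
    intro y
    rw [← hker]
    simp [map_sub, map_zsmul, hy₀', smul_eq_mul]
  let φ : Y →ₗ[ℤ] ↥P × ℤ :=
    LinearMap.prod ((LinearMap.id - LinearMap.smulRight εZ y₀).codRestrict P
      (fun y => by simpa using hres y)) εZ
  let ψ : ↥P × ℤ →ₗ[ℤ] Y :=
    P.subtype.comp (LinearMap.fst ℤ ↥P ℤ) + LinearMap.smulRight (LinearMap.snd ℤ ↥P ℤ) y₀
  have h1 : φ.comp ψ = LinearMap.id := by
    apply LinearMap.ext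
    rintro ⟨x, n⟩
    have hx0 : εZ (x : Y) = 0 := (hker _).mpr x.2
    refine Prod.ext (Subtype.ext ?_) ?_
    · show ((x : Y) + n • y₀) - εZ ((x : Y) + n • y₀) • y₀ = (x : Y)
      simp [map_add, map_zsmul, hx0, hy₀', smul_eq_mul]
    · show εZ ((x : Y) + n • y₀) = n
      simp [map_add, map_zsmul, hx0, hy₀', smul_eq_mul]
  have h2 : ψ.comp φ = LinearMap.id := by
    apply LinearMap.ext
    intro y
    show ((y - εZ y • y₀) + εZ y • y₀ : Y) = y
    simp
  let e3 : Y ≃ₗ[ℤ] ↥P × ℤ := LinearEquiv.ofLinear φ ψ h1 h2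
  have hfinY2 : Module.finrank ℤ Y = m + 1 := by
    haveI : Module.Free ℤ ↥P := Module.Free.of_basis bP
    haveI : Module.Finite ℤ ↥P := Module.Finite.of_basis bP
    rw [e3.finrank_eq, Module.finrank_prod, Module.finrank_self,
      Module.finrank_eq_card_basis bP, Fintype.card_fin]
  have hrank : ∑ v, (Gv v).index = m + 1 := by
    rw [← hfinY, hfinY2]
  rw [hrank]
  simp


end
end
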